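/- (Theorem 4.1, bilinear-type condition at repeated frequency.) Fix an integer η ≥ 1, a frequency σ ∈ ℂ, and a parameter p ∈ P such that K(σ, p) and K̂(σ, p) = Wᵀ K(σ, p) V are invertible. Assume K(σ, p)⁻¹ B(p) lies in the range of V, and the vector K(σ, p)⁻¹ N_η(p) ((K(σ, p)⁻¹ B(p))^{⊗η}) lies in the range of V. Then the parametric bilinear-type transfer functions interpolate: F_N^{(η)}(σ, …, σ, p) = F̂_N^{(η)}(σ, …, σ, p), i.e. C(p) K(σ, p)⁻¹ N_η(p) ((K(σ, p)⁻¹ B(p))^{⊗η}) = Ĉ(p) K̂(σ, p)⁻¹ N̂_η(p) ((K̂(σ, p)⁻¹ B̂(p))^{⊗η}). -/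
import Mathlib


open Matrix

lemma kron_mulVec {n r η : ℕ} (V : Matrix (Fin n) (Fin r) ℂ) (z : Fin r → ℂ) :
    (fun j : Fin η → Fin n => ∏ k, (V *ᵥ z) (j k)) =
      (Matrix.of (fun (j : Fin η → Fin n) (j' : Fin η → Fin r) =>
        ∏ k, V (j k) (j' k))) *ᵥ (fun j' : Fin η → Fin r => ∏ k, z (j' k)) := by
  funext j
  simp only [Matrix.mulVec, dotProduct, Matrix.of_apply]
  rw [Finset.prod_univ_sum]
  refine Finset.sum_congr rfl ?_
  intro g _
  rw [← Finset.prod_mul_distrib]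

/-- Theorem 4.1, bilinear-type condition at repeated frequency: interpolation
of the parametric η-th bilinear-type transfer function at (σ, …, σ, p). -/
theorem parametric_bilinear_transfer_function_interpolation
    (n r η : ℕ) (hn : 0 < n) (hr : 0 < r) (hη : 1 ≤ η) (P : Type*)
    (K : ℂ → P → Matrix (Fin n) (Fin n) ℂ)
    (B C : P → (Fin n → ℂ))
    (Nη : P → Matrix (Fin n) (Fin η → Fin n) ℂ)
    (V W : Matrix (Fin n) (Fin r) ℂ) (σ : ℂ) (p : P)
    (hK : IsUnit (K σ p)) (hKhat : IsUnit (Wᵀ * K σ p * V))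
    (hV1 : ∃ z : Fin r → ℂ, (K σ p)⁻¹ *ᵥ B p = V *ᵥ z)
    (hV2 : ∃ z : Fin r → ℂ,
      (K σ p)⁻¹ *ᵥ (Nη p *ᵥ fun j : Fin η → Fin n =>
        ∏ k, ((K σ p)⁻¹ *ᵥ B p) (j k)) = V *ᵥ z) :
    C p ⬝ᵥ ((K σ p)⁻¹ *ᵥ (Nη p *ᵥ fun j : Fin η → Fin n =>
        ∏ k, ((K σ p)⁻¹ *ᵥ B p) (j k))) =
      (C p ᵥ* V) ⬝ᵥ ((Wᵀ * K σ p * V)⁻¹ *ᵥ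
        ((Wᵀ * Nη p *
            Matrix.of (fun (j : Fin η → Fin n) (j' : Fin η → Fin r) =>
              ∏ k, V (j k) (j' k))) *ᵥ
          fun j : Fin η → Fin r =>
            ∏ k, ((Wᵀ * K σ p * V)⁻¹ *ᵥ (Wᵀ *ᵥ B p)) (j k))) := by
  obtain ⟨z1, hz1⟩ := hV1
  obtain ⟨z2, hz2⟩ := hV2
  have hKd : IsUnit (K σ p).det := (Matrix.isUnit_iff_isUnit_det _).mp hK
  have hKhd : IsUnit (Wᵀ * K σ p * V).det := (Matrix.isUnit_iff_isUnit_det _).mp hKhat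
  have hAAi : K σ p * (K σ p)⁻¹ = 1 := Matrix.mul_nonsing_inv _ hKd
  set Ah := Wᵀ * K σ p * V with hAhdef
  have hAh' : Ah⁻¹ * (Wᵀ * (K σ p * V)) = 1 := by
    rw [← Matrix.mul_assoc Wᵀ (K σ p) V, ← hAhdef]
    exact Matrix.nonsing_inv_mul _ hKhd
  have hB : B p = K σ p *ᵥ (V *ᵥ z1) := by
    rw [← hz1, Matrix.mulVec_mulVec, hAAi, Matrix.one_mulVec]
  have h1 : Ah⁻¹ *ᵥ (Wᵀ *ᵥ B p) = z1 := by
    rw [hB, Matrix.mulVec_mulVec, Matrix.mulVec_mulVec, Matrix.mulVec_mulVec,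
      Matrix.mul_assoc, Matrix.mul_assoc, hAh', Matrix.one_mulVec]
  have hx : Nη p *ᵥ (fun j : Fin η → Fin n => ∏ k, ((K σ p)⁻¹ *ᵥ B p) (j k)) =
      K σ p *ᵥ (V *ᵥ z2) := by
    rw [← hz2, Matrix.mulVec_mulVec, hAAi, Matrix.one_mulVec]
  have h2 : Ah⁻¹ *ᵥ
      ((Wᵀ * Nη p *
          Matrix.of (fun (j : Fin η → Fin n) (j' : Fin η → Fin r) =>
            ∏ k, V (j k) (j' k))) *ᵥ
        fun j : Fin η → Fin r => ∏ k, (Ah⁻¹ *ᵥ (Wᵀ *ᵥ B p)) (j k)) = z2 := by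
    rw [h1, ← Matrix.mulVec_mulVec]
    rw [show (Matrix.of (fun (j : Fin η → Fin n) (j' : Fin η → Fin r) =>
        ∏ k, V (j k) (j' k))) *ᵥ (fun j' : Fin η → Fin r => ∏ k, z1 (j' k)) =
        fun j : Fin η → Fin n => ∏ k, ((K σ p)⁻¹ *ᵥ B p) (j k) by
      rw [← kron_mulVec]; simp [hz1]]
    rw [← Matrix.mulVec_mulVec, hx,
      Matrix.mulVec_mulVec, Matrix.mulVec_mulVec, Matrix.mulVec_mulVec,
      Matrix.mul_assoc, Matrix.mul_assoc, hAh', Matrix.one_mulVec]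
  rw [h2, hz2, ← Matrix.dotProduct_mulVec]
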